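/- arXiv:2603.17820 — 2 statements merged into one kernel-verified Lean document; each statement's English description precedes it below -/
import Mathlib

section
/- Let (X, d) be a metric space and fix constants γ ∈ [0, 1), α ∈ (0, 1], and β ≥ 0. Let q, q̄, q̄′, ŵ, q̃, q_ideal, q⁺ ∈ X, let T : X → X be γ-Lipschitz (i.e., d(T x, T y) ≤ γ·d(x, y) for all x, y), and let Φ : X → X satisfy d(Φ(x), q̄) ≤ β·d(x, q̄) for all x ∈ X. Suppose: (i) d(ŵ, T q) ≤ ξ (approximate backup error); (ii) d(q̃, q̄) ≤ α·d(ŵ, q̄) (shrink step); (iii) q_ideal = Φ(q̃); (iv) d(q⁺, q_ideal) ≤ η (realized-update discrepancy). Define e := d(q, q̄) (tracking error), ε := d(q̄, T q̄) (reference residual), and r := d(q̄′, q̄) (reference drift). Then d(q⁺, q̄′) ≤ α·β·(γ·e + ε + ξ) + r + η. -/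
/-- Single-round stability around a moving reference:
d(q⁺, q̄′) ≤ α·β·(γ·e + ε + ξ) + r + η. -/
theorem single_round_stability {X : Type*} [MetricSpace X]
    (γ α β ξ η : ℝ)
    (hγ : γ ∈ Set.Ico (0 : ℝ) 1) (hα : α ∈ Set.Ioc (0 : ℝ) 1) (hβ : 0 ≤ β)
    (q qbar qbar' what qtil qideal qplus : X)
    (T : X → X) (hT : ∀ x y : X, dist (T x) (T y) ≤ γ * dist x y)
    (Φ : X → X) (hΦ : ∀ x : X, dist (Φ x) qbar ≤ β * dist x qbar)
    (hbackup : dist what (T q) ≤ ξ)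
    (hshrink : dist qtil qbar ≤ α * dist what qbar)
    (hideal : qideal = Φ qtil)
    (hrealized : dist qplus qideal ≤ η) :
    dist qplus qbar' ≤
      α * β * (γ * dist q qbar + dist qbar (T qbar) + ξ) + dist qbar' qbar + η := by
  have hα0 : 0 ≤ α := le_of_lt hα.1
  have hw : dist what qbar ≤ ξ + γ * dist q qbar + dist qbar (T qbar) := by
    calc dist what qbar ≤ dist what (T q) + dist (T q) (T qbar) + dist (T qbar) qbar :=
          dist_triangle4 _ _ _ _
      _ ≤ ξ + γ * dist q qbar + dist qbar (T qbar) := by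
          have := hT q qbar
          rw [dist_comm (T qbar) qbar]
          linarith
  have hideal' : dist qideal qbar ≤ β * (α * (ξ + γ * dist q qbar + dist qbar (T qbar))) := by
    calc dist qideal qbar = dist (Φ qtil) qbar := by rw [hideal]
      _ ≤ β * dist qtil qbar := hΦ qtil
      _ ≤ β * (α * (ξ + γ * dist q qbar + dist qbar (T qbar))) := by
          apply mul_le_mul_of_nonneg_left _ hβ
          calc dist qtil qbar ≤ α * dist what qbar := hshrink
            _ ≤ α * (ξ + γ * dist q qbar + dist qbar (T qbar)) :=
              mul_le_mul_of_nonneg_left hw hα0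
  calc dist qplus qbar' ≤ dist qplus qideal + dist qideal qbar + dist qbar qbar' :=
        dist_triangle4 _ _ _ _
    _ ≤ α * β * (γ * dist q qbar + dist qbar (T qbar) + ξ) + dist qbar' qbar + η := by
        rw [dist_comm qbar qbar']; nlinarith
end

section
/- Let n ≥ 1, let x₁, …, x_n ∈ ℝ, and let β₁, …, β_n be nonnegative weights with ∑_{m=1}^n β_m = 1. Define f(q) := ∑_{m=1}^n β_m·|q − x_m| and let q* := inf{ q ∈ ℝ : ∑_{m : x_m ≤ q} β_m ≥ 1/2 } (a weighted median of the points x_m with weights β_m). Then q* minimizes f: for every q ∈ ℝ, f(q*) ≤ f(q). -/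
/-- Weighted median minimizes weighted ℓ¹ loss:
q* = inf { q : ∑_{m : x_m ≤ q} β_m ≥ 1/2 } minimizes f(q) = ∑_m β_m |q − x_m|. -/
theorem weighted_median_minimizes (n : ℕ) (hn : 1 ≤ n)
    (x : Fin n → ℝ) (β : Fin n → ℝ)
    (hβ : ∀ m, 0 ≤ β m) (hsum : ∑ m, β m = 1) :
    ∀ q : ℝ,
      ∑ m, β m *
          |sInf {q' : ℝ | (1 : ℝ) / 2 ≤ ∑ m ∈ Finset.univ.filter (fun m => x m ≤ q'), β m}
            - x m|
        ≤ ∑ m, β m * |q - x m| := by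
  have hne : (Finset.univ : Finset (Fin n)).Nonempty := ⟨⟨0, hn⟩, Finset.mem_univ _⟩
  set S := {q' : ℝ | (1 : ℝ) / 2 ≤ ∑ m ∈ Finset.univ.filter (fun m => x m ≤ q'), β m} with hS
  set Q := sInf S with hQ
  -- S is nonempty
  have hmaxmem : (Finset.univ.sup' hne x) ∈ S := by
    have hfil : Finset.univ.filter (fun m => x m ≤ Finset.univ.sup' hne x) = Finset.univ := by
      ext m
      simp only [Finset.mem_filter, Finset.mem_univ, true_and, iff_true]
      exact Finset.le_sup' x (Finset.mem_univ m)
    simp only [hS, Set.mem_setOf_eq, hfil, hsum]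
    norm_num
  have hSne : S.Nonempty := ⟨_, hmaxmem⟩
  -- S is bounded below
  have hbdd : BddBelow S := by
    refine ⟨Finset.univ.inf' hne x, fun s hs => ?_⟩
    by_contra h
    push_neg at h
    have hempty : Finset.univ.filter (fun m => x m ≤ s) = ∅ := by
      apply Finset.filter_false_of_mem
      intro m _
      push_neg
      exact lt_of_lt_of_le h (Finset.inf'_le x (Finset.mem_univ m))
    have hmem : (1 : ℝ) / 2 ≤ ∑ m ∈ Finset.univ.filter (fun m => x m ≤ s), β m := hs
    rw [hempty] at hmem
    simp at hmem
    linarith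
  -- Fact A : at least half the mass is at or below Q
  have hA : (1:ℝ)/2 ≤ ∑ m ∈ Finset.univ.filter (fun m => x m ≤ Q), β m := by
    by_cases hT : (Finset.univ.filter (fun m => Q < x m)).Nonempty
    · set c := (Finset.univ.filter (fun m => Q < x m)).inf' hT x with hc
      have hQc : Q < c := by
        obtain ⟨m, hm, hmeq⟩ := Finset.exists_mem_eq_inf' hT x
        rw [hc, hmeq]
        exact (Finset.mem_filter.mp hm).2
      obtain ⟨s, hsS, hsc⟩ := exists_lt_of_csInf_lt hSne hQc
      have hsub : Finset.univ.filter (fun m => x m ≤ s) ⊆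
          Finset.univ.filter (fun m => x m ≤ Q) := by
        intro m hm
        rw [Finset.mem_filter] at hm ⊢
        refine ⟨hm.1, ?_⟩
        by_contra hx
        push_neg at hx
        have : c ≤ x m := Finset.inf'_le x (by simp [hx])
        linarith [hm.2]
      have hmem : (1 : ℝ) / 2 ≤ ∑ m ∈ Finset.univ.filter (fun m => x m ≤ s), β m := hsS
      calc (1:ℝ)/2 ≤ ∑ m ∈ Finset.univ.filter (fun m => x m ≤ s), β m := hmem
        _ ≤ ∑ m ∈ Finset.univ.filter (fun m => x m ≤ Q), β m :=
            Finset.sum_le_sum_of_subset_of_nonneg hsub (fun m _ _ => hβ m)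
    · have hfil : Finset.univ.filter (fun m => x m ≤ Q) = Finset.univ := by
        ext m
        simp only [Finset.mem_filter, Finset.mem_univ, true_and, iff_true]
        by_contra hx
        push_neg at hx
        exact hT ⟨m, by simp [hx]⟩
      rw [hfil, hsum]; norm_num
  -- Fact B : at most half the mass is strictly below Q
  have hB : ∑ m ∈ Finset.univ.filter (fun m => x m < Q), β m ≤ (1:ℝ)/2 := by
    by_cases hU : (Finset.univ.filter (fun m => x m < Q)).Nonempty
    · set c := (Finset.univ.filter (fun m => x m < Q)).sup' hU x with hc
      have hcQ : c < Q := by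
        obtain ⟨m, hm, hmeq⟩ := Finset.exists_mem_eq_sup' hU x
        rw [hc, hmeq]
        exact (Finset.mem_filter.mp hm).2
      set q0 := (c + Q) / 2 with hq0
      have hcq0 : c < q0 := by rw [hq0]; linarith
      have hq0Q : q0 < Q := by rw [hq0]; linarith
      have hq0S : q0 ∉ S := by
        intro h
        exact absurd (csInf_le hbdd h) (not_le.mpr hq0Q)
      have hlt : ∑ m ∈ Finset.univ.filter (fun m => x m ≤ q0), β m < (1:ℝ)/2 := by
        by_contra h
        push_neg at h
        exact hq0S h
      have hsub : Finset.univ.filter (fun m => x m < Q) ⊆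
          Finset.univ.filter (fun m => x m ≤ q0) := by
        intro m hm
        rw [Finset.mem_filter] at hm ⊢
        refine ⟨hm.1, ?_⟩
        have : x m ≤ c := Finset.le_sup' x (by simp [hm.2])
        linarith
      calc ∑ m ∈ Finset.univ.filter (fun m => x m < Q), β m
          ≤ ∑ m ∈ Finset.univ.filter (fun m => x m ≤ q0), β m :=
            Finset.sum_le_sum_of_subset_of_nonneg hsub (fun m _ _ => hβ m)
        _ ≤ (1:ℝ)/2 := le_of_lt hlt
    · rw [Finset.not_nonempty_iff_eq_empty] at hU
      rw [hU]
      simp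
  intro q
  rcases le_or_gt Q q with hQq | hQq
  · -- case Q ≤ q : use the shift s m = if x m ≤ Q then (q - Q) else (Q - q)
    have key : ∀ m ∈ Finset.univ,
        β m * |Q - x m| + β m * (if x m ≤ Q then q - Q else Q - q) ≤ β m * |q - x m| := by
      intro m _
      rw [← mul_add]
      apply mul_le_mul_of_nonneg_left _ (hβ m)
      split_ifs with h
      · rw [abs_of_nonneg (by linarith), abs_of_nonneg (by linarith)]
        linarith
      · have h1 := abs_sub_le Q q (x m)
        have h2 : |Q - q| = q - Q := by rw [abs_of_nonpos (by linarith)]; ring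
        linarith
    have hsumle := Finset.sum_le_sum key
    have hsplit := Finset.sum_filter_add_sum_filter_not Finset.univ (fun m => x m ≤ Q) β
    have hshift : 0 ≤ ∑ m, β m * (if x m ≤ Q then q - Q else Q - q) := by
      have : ∑ m, β m * (if x m ≤ Q then q - Q else Q - q)
          = (∑ m ∈ Finset.univ.filter (fun m => x m ≤ Q), β m) * (q - Q)
            + (∑ m ∈ Finset.univ.filter (fun m => ¬ x m ≤ Q), β m) * (Q - q) := by
        simp only [mul_ite]
        rw [Finset.sum_ite, Finset.sum_mul, Finset.sum_mul]
      rw [this]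
      have h1 : ∑ m ∈ Finset.univ.filter (fun m => ¬ x m ≤ Q), β m
          = 1 - ∑ m ∈ Finset.univ.filter (fun m => x m ≤ Q), β m := by
        rw [← hsum, ← hsplit]; ring
      rw [h1]
      nlinarith
    rw [Finset.sum_add_distrib] at hsumle
    linarith
  · -- case q < Q : use the shift s m = if x m < Q then (q - Q) else (Q - q)
    have key : ∀ m ∈ Finset.univ,
        β m * |Q - x m| + β m * (if x m < Q then q - Q else Q - q) ≤ β m * |q - x m| := by
      intro m _
      rw [← mul_add]
      apply mul_le_mul_of_nonneg_left _ (hβ m)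
      split_ifs with h
      · have h1 := abs_sub_le Q q (x m)
        have h2 : |Q - q| = Q - q := abs_of_nonneg (by linarith)
        linarith
      · push_neg at h
        rw [abs_of_nonpos (by linarith), abs_of_nonpos (by linarith)]
        linarith
    have hsumle := Finset.sum_le_sum key
    have hshift : 0 ≤ ∑ m, β m * (if x m < Q then q - Q else Q - q) := by
      have hsplit := Finset.sum_filter_add_sum_filter_not Finset.univ (fun m => x m < Q) β
      have heq : ∑ m, β m * (if x m < Q then q - Q else Q - q)
          = (∑ m ∈ Finset.univ.filter (fun m => x m < Q), β m) * (q - Q)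
            + (∑ m ∈ Finset.univ.filter (fun m => ¬ x m < Q), β m) * (Q - q) := by
        simp only [mul_ite]
        rw [Finset.sum_ite, Finset.sum_mul, Finset.sum_mul]
      rw [heq]
      have h1 : ∑ m ∈ Finset.univ.filter (fun m => ¬ x m < Q), β m
          = 1 - ∑ m ∈ Finset.univ.filter (fun m => x m < Q), β m := by
        rw [← hsum, ← hsplit]; ring
      rw [h1]
      nlinarith
    rw [Finset.sum_add_distrib] at hsumle
    linarith
end
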